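/- arXiv:1809.06986 — 5 statements merged into one kernel-verified Lean document; each statement's English description precedes it below -/
import Mathlib

section
/- Let A be an m×n distance matrix, x = argmin_i A_{i,1}, d₀ = max_j A_{x,j}, and d_max = max_{j,j'} max_i |A_{i,j} − A_{i,j'}|. If d₀ ≥ 8 d_max, then for every row index i and every column j, d'/3 ≤ A_{i,j} ≤ (8/3) d', where d' = max_j A_{i,j}; i.e., all entries of the i-th row are within a factor 8 of each other. -/
/-!
Entries of a single row differ by at most `dmax`. In row `x` this gives
`A x 0 ≥ d₀ - dmax ≥ 7 dmax`, so by minimality of `x` every row maximum satisfies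
`d' ≥ A i 0 ≥ 7 dmax`, and then `A i j ≥ d' - dmax ≥ (6/7) d'`.
-/

open Finset

section RowSpread

variable {ι : Type*} [Fintype ι] (hι : (univ : Finset ι).Nonempty)

theorem sup'_sub_le_of_abs_sub_le {f : ι → ℝ} {δ : ℝ} (hf : ∀ a b, |f a - f b| ≤ δ) (j : ι) :
    univ.sup' hι f - δ ≤ f j := by
  obtain ⟨k, -, hk⟩ := exists_mem_eq_sup' hι f
  linarith [(abs_sub_le_iff.mp (hf k j)).1]

theorem sup'_div_three_le_and_le_eight_thirds_mul_sup' {f : ι → ℝ} {δ : ℝ}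
    (hf : ∀ a b, |f a - f b| ≤ δ) (hmax : 7 * δ ≤ univ.sup' hι f) (j : ι) :
    univ.sup' hι f / 3 ≤ f j ∧ f j ≤ (8 / 3) * univ.sup' hι f := by
  have hδ : 0 ≤ δ := (abs_nonneg _).trans (hf j j)
  have hlow := sup'_sub_le_of_abs_sub_le hι hf j
  have hup : f j ≤ univ.sup' hι f := le_sup' f (mem_univ j)
  constructor <;> linarith

end RowSpread

theorem abs_sub_le_sup'_sup'_sup' {ι κ : Type*} [Fintype ι] [Fintype κ]
    (hι : (univ : Finset ι).Nonempty) (hκ : (univ : Finset κ).Nonempty)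
    (A : Matrix ι κ ℝ) (i : ι) (a b : κ) :
    |A i a - A i b| ≤ univ.sup' hκ fun j => univ.sup' hκ fun j' =>
      univ.sup' hι fun i => |A i j - A i j'| :=
  le_sup'_of_le _ (mem_univ a) <| le_sup'_of_le _ (mem_univ b) <|
    le_sup' (fun i => |A i a - A i b|) (mem_univ i)

theorem stmt3_general (m n : ℕ) (hm : 0 < m) (hn : 0 < n)
    (A : Matrix (Fin m) (Fin n) ℝ)
    (x : Fin m) (hx : ∀ i : Fin m, A x ⟨0, hn⟩ ≤ A i ⟨0, hn⟩)
    (d₀ dmax : ℝ)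
    (hd₀ : d₀ = Finset.univ.sup' (Finset.univ_nonempty_iff.mpr ⟨⟨0, hn⟩⟩) (fun j => A x j))
    (hdmax : dmax = Finset.univ.sup' (Finset.univ_nonempty_iff.mpr ⟨⟨0, hn⟩⟩) fun j =>
      Finset.univ.sup' (Finset.univ_nonempty_iff.mpr ⟨⟨0, hn⟩⟩) fun j' =>
        Finset.univ.sup' (Finset.univ_nonempty_iff.mpr ⟨⟨0, hm⟩⟩) fun i => |A i j - A i j'|)
    (h : 8 * dmax ≤ d₀) :
    ∀ (i : Fin m) (j : Fin n),
      (Finset.univ.sup' (Finset.univ_nonempty_iff.mpr ⟨⟨0, hn⟩⟩) (fun j' => A i j')) / 3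
        ≤ A i j ∧
      A i j ≤ (8 / 3) *
        Finset.univ.sup' (Finset.univ_nonempty_iff.mpr ⟨⟨0, hn⟩⟩) (fun j' => A i j') := by
  intro i j
  have hn' : (univ : Finset (Fin n)).Nonempty := univ_nonempty_iff.mpr ⟨⟨0, hn⟩⟩
  have hspread : ∀ i' a b, |A i' a - A i' b| ≤ dmax := fun i' a b =>
    hdmax ▸ abs_sub_le_sup'_sup'_sup' _ _ A i' a b
  refine sup'_div_three_le_and_le_eight_thirds_mul_sup' hn' (hspread i) ?_ j
  calc 7 * dmax ≤ d₀ - dmax := by linarith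
    _ ≤ A x ⟨0, hn⟩ := hd₀ ▸ sup'_sub_le_of_abs_sub_le hn' (hspread x) _
    _ ≤ A i ⟨0, hn⟩ := hx i
    _ ≤ univ.sup' hn' (fun j' => A i j') := le_sup' (fun j' => A i j') (mem_univ _)

/-- For a distance matrix `A`, with `x = argmin_i A i 0`, `d₀ = max_j A x j`,
`d_max = max_{j,j'} max_i |A i j - A i j'|`: if `d₀ ≥ 8 d_max` then for every row `i` and
column `j`, `d'/3 ≤ A i j ≤ (8/3) d'`, where `d' = max_j A i j`. -/
theorem stmt3 {X : Type*} [MetricSpace X] (m n : ℕ) (hm : 0 < m) (hn : 0 < n)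
    (p : Fin m → X) (q : Fin n → X)
    (A : Matrix (Fin m) (Fin n) ℝ) (hA : ∀ i j, A i j = dist (p i) (q j))
    (x : Fin m) (hx : ∀ i : Fin m, A x ⟨0, hn⟩ ≤ A i ⟨0, hn⟩)
    (d₀ dmax : ℝ)
    (hd₀ : d₀ = Finset.univ.sup' (Finset.univ_nonempty_iff.mpr ⟨⟨0, hn⟩⟩) (fun j => A x j))
    (hdmax : dmax = Finset.univ.sup' (Finset.univ_nonempty_iff.mpr ⟨⟨0, hn⟩⟩) fun j =>
      Finset.univ.sup' (Finset.univ_nonempty_iff.mpr ⟨⟨0, hn⟩⟩) fun j' =>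
        Finset.univ.sup' (Finset.univ_nonempty_iff.mpr ⟨⟨0, hm⟩⟩) fun i => |A i j - A i j'|)
    (h : 8 * dmax ≤ d₀) :
    ∀ (i : Fin m) (j : Fin n),
      (Finset.univ.sup' (Finset.univ_nonempty_iff.mpr ⟨⟨0, hn⟩⟩) (fun j' => A i j')) / 3
        ≤ A i j ∧
      A i j ≤ (8 / 3) *
        Finset.univ.sup' (Finset.univ_nonempty_iff.mpr ⟨⟨0, hn⟩⟩) (fun j' => A i j') :=
  stmt3_general m n hm hn A x hx d₀ dmax hd₀ hdmax h
end

section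
/- Let A be an m×n real matrix and let q = (q_1,…,q_n) be a probability distribution on columns with q_j ≥ (b/m)·‖A_{*,j}‖₂²/‖A‖_F² for all j with A_{*,j} ≠ 0. Form C ∈ ℝ^{m×t} by sampling t columns i.i.d. from q and setting each sampled column to A_{*,j}/√(t q_j). Then E[C Cᵀ] = A Aᵀ, and for each sample i, the random matrix X_i = (1/t)((1/q_j) A_{*,j} A_{*,j}ᵀ − A Aᵀ) satisfies ‖X_i‖₂ ≤ (2m)/(t b)·‖A‖_F². -/
open Finset Matrix

/-- Operator (spectral) norm of a real matrix. -/
noncomputable def opNorm {m n : ℕ} (M : Matrix (Fin m) (Fin n) ℝ) : ℝ :=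
  ‖LinearMap.toContinuousLinearMap (Matrix.toEuclideanLin M)‖

/-!
Sampling column `j` with probability `q j` and rescaling it by `(t q_j)^{-1/2}` contributes the
estimator `q_j⁻¹ a_j a_jᵀ / t` to `C Cᵀ`; the `q`-average of `q_j⁻¹ a_j a_jᵀ` is `A Aᵀ`, because the
importance condition forces the columns with `q_j = 0` to vanish. The same condition gives
`‖q_j⁻¹ a_j a_jᵀ‖₂ ≤ ‖a_j‖² / q_j ≤ (m/b) ‖A‖_F²`, and `A Aᵀ`, being a convex combination of these
estimators, obeys the same bound; the triangle inequality then yields the factor `2`.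
-/

open scoped Matrix.Norms.L2Operator

theorem opNorm_eq_l2_opNorm {m n : ℕ} (M : Matrix (Fin m) (Fin n) ℝ) : opNorm M = ‖M‖ := rfl

theorem Fintype.sum_pi_prod_mul_apply {ι κ R : Type*} [Fintype ι] [DecidableEq ι] [Fintype κ]
    [CommSemiring R] {q : κ → R} (hq : ∑ k, q k = 1) (i₀ : ι) (h : κ → R) :
    ∑ f : ι → κ, (∏ i, q (f i)) * h (f i₀) = ∑ k, q k * h k := by
  have hsplit (f : ι → κ) :
      (∏ i, q (f i)) * h (f i₀) = ∏ i, q (f i) * if i = i₀ then h (f i) else 1 := by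
    rw [prod_mul_distrib, Fintype.prod_ite_eq']
  simp_rw [hsplit]
  rw [← Fintype.prod_sum (fun i k => q k * if i = i₀ then h k else 1)]
  simp_rw [mul_ite, mul_one, Finset.sum_ite_irrel, hq]
  rw [Fintype.prod_ite_eq']

theorem Fintype.sum_pi_prod_smul_apply {ι κ R M : Type*} [Fintype ι] [DecidableEq ι] [Fintype κ]
    [DecidableEq κ] [CommSemiring R] [AddCommMonoid M] [Module R M] {q : κ → R}
    (hq : ∑ k, q k = 1) (i₀ : ι) (v : κ → M) :
    ∑ f : ι → κ, (∏ i, q (f i)) • v (f i₀) = ∑ k, q k • v k := by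
  rw [← Finset.sum_fiberwise univ (fun f : ι → κ => f i₀)]
  refine Finset.sum_congr rfl fun k _ => ?_
  have := Fintype.sum_pi_prod_mul_apply hq i₀ (fun k' => if k' = k then 1 else 0)
  simp only [mul_ite, mul_one, mul_zero, Finset.sum_ite_eq', mem_univ, if_true] at this
  rw [← this, Finset.sum_smul, Finset.sum_filter]
  refine Finset.sum_congr rfl fun f _ => ?_
  split_ifs with hf <;> simp [hf]

theorem Matrix.l2_opNorm_vecMulVec_le {m n : Type*} [Fintype m] [Fintype n] [DecidableEq n]
    (u : m → ℝ) (v : n → ℝ) :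
    ‖vecMulVec u v‖ ≤ ‖WithLp.toLp 2 u‖ * ‖WithLp.toLp 2 v‖ := by
  rw [l2_opNorm_def]
  refine ContinuousLinearMap.opNorm_le_bound _ (by positivity) fun x => ?_
  have hx : vecMulVec u v *ᵥ x.ofLp = (x.ofLp ⬝ᵥ v) • u := by
    rw [vecMulVec_mulVec, op_smul_eq_smul, dotProduct_comm]
  calc ‖WithLp.toLp 2 (vecMulVec u v *ᵥ x.ofLp)‖
      = |inner ℝ (WithLp.toLp 2 v) x| * ‖WithLp.toLp 2 u‖ := by
        rw [hx, WithLp.toLp_smul, norm_smul, Real.norm_eq_abs]; rfl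
    _ ≤ ‖WithLp.toLp 2 v‖ * ‖x‖ * ‖WithLp.toLp 2 u‖ := by
        gcongr; exact abs_real_inner_le_norm _ _
    _ = ‖WithLp.toLp 2 u‖ * ‖WithLp.toLp 2 v‖ * ‖x‖ := by ring

theorem Matrix.l2_opNorm_vecMulVec_self_le {m : Type*} [Fintype m] [DecidableEq m] (v : m → ℝ) :
    ‖vecMulVec v v‖ ≤ ∑ i, v i ^ 2 := by
  calc ‖vecMulVec v v‖ ≤ ‖WithLp.toLp 2 v‖ ^ 2 := (l2_opNorm_vecMulVec_le v v).trans_eq (sq _).symm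
    _ = ∑ i, v i ^ 2 := EuclideanSpace.real_norm_sq_eq _

theorem Matrix.mul_transpose_self_eq_sum_vecMulVec {m n R : Type*} [Fintype n] [CommSemiring R]
    (A : Matrix m n R) : A * Aᵀ = ∑ j, vecMulVec (fun i => A i j) (fun i => A i j) := by
  ext i k
  simp [mul_apply, sum_apply, vecMulVec_apply]

section ColumnSampling

variable {m n : Type*} (A : Matrix m n ℝ) (q : n → ℝ)

noncomputable def colEstimator (j : n) : Matrix m m ℝ :=
  (q j)⁻¹ • vecMulVec (fun i => A i j) (fun i => A i j)

noncomputable def sampleMatrix {t : ℕ} (f : Fin t → n) : Matrix m (Fin t) ℝ :=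
  of fun i s => A i (f s) / √((t : ℝ) * q (f s))

theorem sum_sq_col_le_sum_sq [Fintype m] [Fintype n] (j : n) :
    ∑ i, A i j ^ 2 ≤ ∑ i, ∑ j', A i j' ^ 2 :=
  sum_le_sum fun i _ => single_le_sum (f := fun j' => A i j' ^ 2) (fun _ _ => sq_nonneg _)
    (mem_univ j)

variable {A q}

theorem sampleMatrix_mul_transpose (hq0 : ∀ j, 0 ≤ q j) {t : ℕ} (f : Fin t → n) :
    sampleMatrix A q f * (sampleMatrix A q f)ᵀ = (t : ℝ)⁻¹ • ∑ s, colEstimator A q (f s) := by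
  ext i k
  simp only [sampleMatrix, colEstimator, mul_apply, transpose_apply, of_apply, Matrix.smul_apply,
    Matrix.sum_apply, vecMulVec_apply, smul_eq_mul, mul_sum]
  refine sum_congr rfl fun s _ => ?_
  rw [div_mul_div_comm, Real.mul_self_sqrt (mul_nonneg t.cast_nonneg (hq0 _))]
  ring

theorem sum_smul_colEstimator [Fintype n] (hzero : ∀ j, q j = 0 → (fun i => A i j) = 0) :
    ∑ j, q j • colEstimator A q j = A * Aᵀ := by
  rw [mul_transpose_self_eq_sum_vecMulVec]
  refine sum_congr rfl fun j _ => ?_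
  rcases eq_or_ne (q j) 0 with h | h
  · simp [colEstimator, h, hzero j h]
  · rw [colEstimator, smul_inv_smul₀ h]

theorem sum_prod_smul_sampleMatrix_mul_transpose [Fintype n] [DecidableEq n] {t : ℕ} (ht : 0 < t)
    (hq0 : ∀ j, 0 ≤ q j) (hq1 : ∑ j, q j = 1) (hzero : ∀ j, q j = 0 → (fun i => A i j) = 0) :
    ∑ f : Fin t → n, (∏ s, q (f s)) • (sampleMatrix A q f * (sampleMatrix A q f)ᵀ) =
      A * Aᵀ := by
  have hterm (f : Fin t → n) :
      (∏ s, q (f s)) • (sampleMatrix A q f * (sampleMatrix A q f)ᵀ) =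
        (t : ℝ)⁻¹ • ∑ s, (∏ s', q (f s')) • colEstimator A q (f s) := by
    rw [sampleMatrix_mul_transpose hq0, smul_comm, smul_sum]
  simp_rw [hterm]
  rw [← smul_sum, sum_comm]
  simp_rw [Fintype.sum_pi_prod_smul_apply hq1, sum_smul_colEstimator hzero]
  rw [sum_const, card_univ, Fintype.card_fin, ← Nat.cast_smul_eq_nsmul ℝ, smul_smul,
    inv_mul_cancel₀ (by positivity), one_smul]

section Importance

variable [Fintype m] [Fintype n] {c : ℝ}

theorem sum_sq_col_le_of_le_importance (hc : 0 < c) {j : n} (hqj : 0 ≤ q j)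
    (hq : (fun i => A i j) ≠ 0 → c * (∑ i, A i j ^ 2) / (∑ i, ∑ j', A i j' ^ 2) ≤ q j) :
    ∑ i, A i j ^ 2 ≤ c⁻¹ * (∑ i, ∑ j', A i j' ^ 2) * q j := by
  by_cases hS : ∑ i, A i j ^ 2 = 0
  · rw [hS]
    positivity
  replace hS : 0 < ∑ i, A i j ^ 2 := (sum_nonneg fun _ _ => sq_nonneg _).lt_of_ne' hS
  have hcol : (fun i => A i j) ≠ 0 := fun h =>
    hS.ne' (sum_eq_zero fun i _ => by simp [congrFun h i])
  have h := hq hcol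
  rw [div_le_iff₀ (hS.trans_le (sum_sq_col_le_sum_sq A j))] at h
  rw [inv_mul_eq_div, div_mul_eq_mul_div, le_div_iff₀ hc]
  linarith

theorem col_eq_zero_of_le_importance (hc : 0 < c) {j : n} (hqj : q j = 0)
    (hq : (fun i => A i j) ≠ 0 → c * (∑ i, A i j ^ 2) / (∑ i, ∑ j', A i j' ^ 2) ≤ q j) :
    (fun i => A i j) = 0 := by
  have h := sum_sq_col_le_of_le_importance hc hqj.ge hq
  rw [hqj, mul_zero] at h
  funext i
  have hsq := (sum_eq_zero_iff_of_nonneg fun _ _ => sq_nonneg _).mp (h.antisymm (by positivity))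
  exact pow_eq_zero_iff two_ne_zero |>.mp (hsq i (mem_univ i))

variable [DecidableEq m]

theorem norm_colEstimator_le (hc : 0 < c) {j : n} (hqj : 0 ≤ q j)
    (hq : (fun i => A i j) ≠ 0 → c * (∑ i, A i j ^ 2) / (∑ i, ∑ j', A i j' ^ 2) ≤ q j) :
    ‖colEstimator A q j‖ ≤ c⁻¹ * ∑ i, ∑ j', A i j' ^ 2 := by
  calc ‖colEstimator A q j‖ = (q j)⁻¹ * ‖vecMulVec (fun i => A i j) (fun i => A i j)‖ := by
        rw [colEstimator, norm_smul, Real.norm_of_nonneg (inv_nonneg.mpr hqj)]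
    _ ≤ (q j)⁻¹ * (c⁻¹ * (∑ i, ∑ j', A i j' ^ 2) * q j) := by
        gcongr
        exact (l2_opNorm_vecMulVec_self_le _).trans (sum_sq_col_le_of_le_importance hc hqj hq)
    _ = c⁻¹ * (∑ i, ∑ j', A i j' ^ 2) * (q j * (q j)⁻¹) := by ring
    _ ≤ c⁻¹ * ∑ i, ∑ j', A i j' ^ 2 := mul_le_of_le_one_right (by positivity) mul_inv_le_one

theorem norm_mul_transpose_self_le (hc : 0 < c) (hq0 : ∀ j, 0 ≤ q j) (hq1 : ∑ j, q j = 1)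
    (hq : ∀ j, (fun i => A i j) ≠ 0 → c * (∑ i, A i j ^ 2) / (∑ i, ∑ j', A i j' ^ 2) ≤ q j) :
    ‖A * Aᵀ‖ ≤ c⁻¹ * ∑ i, ∑ j', A i j' ^ 2 := by
  rw [← sum_smul_colEstimator fun j hj => col_eq_zero_of_le_importance hc hj (hq j)]
  calc ‖∑ j, q j • colEstimator A q j‖ ≤ ∑ j, q j * (c⁻¹ * ∑ i, ∑ j', A i j' ^ 2) := by
        refine (norm_sum_le _ _).trans (sum_le_sum fun j _ => ?_)
        rw [norm_smul, Real.norm_of_nonneg (hq0 j)]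
        exact mul_le_mul_of_nonneg_left (norm_colEstimator_le hc (hq0 j) (hq j)) (hq0 j)
    _ = c⁻¹ * ∑ i, ∑ j', A i j' ^ 2 := by rw [← sum_mul, hq1, one_mul]

theorem norm_colEstimator_sub_le (hc : 0 < c) (hq0 : ∀ j, 0 ≤ q j) (hq1 : ∑ j, q j = 1)
    (hq : ∀ j, (fun i => A i j) ≠ 0 → c * (∑ i, A i j ^ 2) / (∑ i, ∑ j', A i j' ^ 2) ≤ q j)
    (j : n) :
    ‖colEstimator A q j - A * Aᵀ‖ ≤ 2 * (c⁻¹ * ∑ i, ∑ j', A i j' ^ 2) := by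
  rw [two_mul]
  exact (norm_sub_le _ _).trans <|
    add_le_add (norm_colEstimator_le hc (hq0 j) (hq j)) (norm_mul_transpose_self_le hc hq0 hq1 hq)

end Importance

end ColumnSampling

theorem stmt7_general (m n t b : ℕ) (hm : 0 < m) (ht : 0 < t) (hb : 0 < b)
    (A : Matrix (Fin m) (Fin n) ℝ)
    (q : Fin n → ℝ) (hq0 : ∀ j, 0 ≤ q j) (hq1 : ∑ j, q j = 1)
    (hq : ∀ j, (fun i => A i j) ≠ 0 →
      ((b : ℝ) / m) * (∑ i, (A i j) ^ 2) / (∑ i, ∑ j', (A i j') ^ 2) ≤ q j)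
    (C : (Fin t → Fin n) → Matrix (Fin m) (Fin t) ℝ)
    (hC : ∀ f : Fin t → Fin n, C f =
      Matrix.of fun i s => A i (f s) / Real.sqrt (t * q (f s))) :
    (∑ f : Fin t → Fin n, (∏ s, q (f s)) • (C f * (C f)ᵀ) = A * Aᵀ) ∧
    (∀ j : Fin n, 0 < q j →
      opNorm ((1 / (t : ℝ)) •
          ((1 / q j) • Matrix.vecMulVec (fun i => A i j) (fun i => A i j) - A * Aᵀ))
        ≤ (2 * m) / (t * b) * ∑ i, ∑ j', (A i j') ^ 2) := by
  have hc : (0 : ℝ) < b / m := div_pos (Nat.cast_pos.mpr hb) (Nat.cast_pos.mpr hm)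
  refine ⟨?_, fun j _ => ?_⟩
  · simp_rw [hC]
    exact sum_prod_smul_sampleMatrix_mul_transpose ht hq0 hq1
      fun j hj => col_eq_zero_of_le_importance hc hj (hq j)
  · rw [opNorm_eq_l2_opNorm, norm_smul, one_div, one_div, Real.norm_of_nonneg (by positivity)]
    calc (t : ℝ)⁻¹ * ‖colEstimator A q j - A * Aᵀ‖
        ≤ (t : ℝ)⁻¹ * (2 * ((b / m : ℝ)⁻¹ * ∑ i, ∑ j', A i j' ^ 2)) := by
          gcongr
          exact norm_colEstimator_sub_le hc hq0 hq1 hq j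
      _ = (2 * m) / (t * b) * ∑ i, ∑ j', A i j' ^ 2 := by
          rw [inv_div]
          ring

/-- Column sampling with probabilities `q j ≥ (b/m)‖A_{*,j}‖²/‖A‖_F²`:
`E[C Cᵀ] = A Aᵀ` (the expectation taken over i.i.d. samples `f : Fin t → Fin n` with
weight `∏ s, q (f s)`, where `C f` has columns `A_{*,f s}/√(t q (f s))`), and each centered
sample matrix `X = (1/t)((1/q_j) A_{*,j} A_{*,j}ᵀ − A Aᵀ)` has operator norm at most
`(2m/(t b))·‖A‖_F²`. -/
theorem stmt7 (m n t b : ℕ) (hm : 0 < m) (hn : 0 < n) (ht : 0 < t) (hb : 0 < b)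
    (hbm : b ≤ m)
    (A : Matrix (Fin m) (Fin n) ℝ)
    (q : Fin n → ℝ) (hq0 : ∀ j, 0 ≤ q j) (hq1 : ∑ j, q j = 1)
    (hq : ∀ j, (fun i => A i j) ≠ 0 →
      ((b : ℝ) / m) * (∑ i, (A i j) ^ 2) / (∑ i, ∑ j', (A i j') ^ 2) ≤ q j)
    (C : (Fin t → Fin n) → Matrix (Fin m) (Fin t) ℝ)
    (hC : ∀ f : Fin t → Fin n, C f =
      Matrix.of fun i s => A i (f s) / Real.sqrt (t * q (f s))) :
    (∑ f : Fin t → Fin n, (∏ s, q (f s)) • (C f * (C f)ᵀ) = A * Aᵀ) ∧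
    (∀ j : Fin n, 0 < q j →
      opNorm ((1 / (t : ℝ)) •
          ((1 / q j) • Matrix.vecMulVec (fun i => A i j) (fun i => A i j) - A * Aᵀ))
        ≤ (2 * m) / (t * b) * ∑ i, ∑ j', (A i j') ^ 2) :=
  stmt7_general m n t b hm ht hb A q hq0 hq1 hq C hC
end

section
/- Let A ∈ ℝ^{m×n}, let ℓ be the number of singular values of A with σ_i² ≥ ‖A‖_F²/k, let P_{∖ℓ} = U_{∖ℓ}U_{∖ℓ}ᵀ be the projection onto the left singular vectors beyond the top ℓ, and let C satisfy the two-sided spectral bound C Cᵀ − (ε/k)‖A‖_F² I ⪯ A Aᵀ ⪯ C Cᵀ + (ε/k)‖A‖_F² I. Then P_{∖ℓ} C Cᵀ P_{∖ℓ} − (2ε/k)‖A‖_F² I ⪯ A_{∖ℓ} A_{∖ℓ}ᵀ ⪯ P_{∖ℓ} C Cᵀ P_{∖ℓ} + (2ε/k)‖A‖_F² I, where A_{∖ℓ} = P_{∖ℓ} A, using that every unit vector x in the range of P_{∖ℓ} satisfies xᵀ A Aᵀ x ≤ ‖A‖_F²/k. -/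
/-!
Compressing a two-sided spectral bound `Y ≤ X + c • 1` by an orthogonal projection `P` gives
`P Y P ≤ P X P + c • P`, and `c • P ≤ c • 1` because `P ≤ 1`. Hence the bound survives the
compression with the same slack `c`, a fortiori with `2c`.
-/

open Matrix

/-- Squared Frobenius norm. -/
def frobSq {m n : ℕ} (M : Matrix (Fin m) (Fin n) ℝ) : ℝ := ∑ i, ∑ j, (M i j) ^ 2

open scoped MatrixOrder

lemma frobSq_nonneg {m n : ℕ} (M : Matrix (Fin m) (Fin n) ℝ) : 0 ≤ frobSq M := by
  unfold frobSq; positivity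

lemma IsStarProjection.conjugate_le_conjugate_add_smul_one {α R : Type*} [CommSemiring α]
    [PartialOrder α] [Ring R] [PartialOrder R] [StarRing R] [StarOrderedRing R] [Algebra α R]
    [PosSMulMono α R] {p x y : R} (hp : IsStarProjection p) {c : α} (hc : 0 ≤ c)
    (h : y ≤ x + c • 1) : p * y * p ≤ p * x * p + c • 1 :=
  calc p * y * p ≤ p * (x + c • 1) * p := hp.isSelfAdjoint.conjugate_le_conjugate h
    _ = p * x * p + c • p := by
      rw [mul_add, add_mul, mul_smul_one, smul_mul_assoc, hp.isIdempotentElem.eq]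
    _ ≤ p * x * p + c • 1 := by gcongr; exact hp.le_one

lemma Matrix.isStarProjection_mul_conjTranspose {ι κ α : Type*} [Fintype ι] [Fintype κ]
    [DecidableEq κ] [CommSemiring α] [StarRing α] {U : Matrix ι κ α} (hU : Uᴴ * U = 1) :
    IsStarProjection (U * Uᴴ) where
  isIdempotentElem := by
    rw [IsIdempotentElem, Matrix.mul_assoc, ← Matrix.mul_assoc Uᴴ, hU, Matrix.one_mul]
  isSelfAdjoint := isHermitian_mul_conjTranspose_self U

theorem stmt10_general (m n t k s : ℕ)
    (A : Matrix (Fin m) (Fin n) ℝ) (C : Matrix (Fin m) (Fin t) ℝ)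
    (ε : ℝ) (hε0 : 0 < ε)
    (hlow : Matrix.PosSemidef
      (A * Aᵀ + (ε / k * frobSq A) • (1 : Matrix (Fin m) (Fin m) ℝ) - C * Cᵀ))
    (hup : Matrix.PosSemidef
      (C * Cᵀ + (ε / k * frobSq A) • (1 : Matrix (Fin m) (Fin m) ℝ) - A * Aᵀ))
    (U : Matrix (Fin m) (Fin s) ℝ) (hU : Uᵀ * U = 1)
    (P : Matrix (Fin m) (Fin m) ℝ) (hP : P = U * Uᵀ) :
    Matrix.PosSemidef ((P * A) * (P * A)ᵀ +
      (2 * ε / k * frobSq A) • (1 : Matrix (Fin m) (Fin m) ℝ) - P * C * Cᵀ * P) ∧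
    Matrix.PosSemidef (P * C * Cᵀ * P +
      (2 * ε / k * frobSq A) • (1 : Matrix (Fin m) (Fin m) ℝ) - (P * A) * (P * A)ᵀ) := by
  set c := ε / k * frobSq A
  have hc : 0 ≤ c := by have := frobSq_nonneg A; positivity
  have hproj : IsStarProjection P := by
    rw [← conjTranspose_eq_transpose_of_trivial] at hU hP
    exact hP ▸ isStarProjection_mul_conjTranspose hU
  have hwiden : c • (1 : Matrix (Fin m) (Fin m) ℝ) ≤ (2 * ε / k * frobSq A) • 1 := by
    rw [show 2 * ε / k * frobSq A = c + c by ring, add_smul]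
    exact le_add_of_nonneg_right (PosSemidef.one.smul hc).nonneg
  have hPA : (P * A) * (P * A)ᵀ = P * (A * Aᵀ) * P := by
    rw [transpose_mul, ← conjTranspose_eq_transpose_of_trivial P,
      show Pᴴ = P from hproj.isSelfAdjoint]
    simp only [Matrix.mul_assoc]
  have hPC : P * C * Cᵀ * P = P * (C * Cᵀ) * P := by simp only [Matrix.mul_assoc]
  have compress {X Y : Matrix (Fin m) (Fin m) ℝ} (h : (X + c • 1 - Y).PosSemidef) :
      (P * X * P + (2 * ε / k * frobSq A) • 1 - P * Y * P).PosSemidef :=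
    le_iff.mp ((hproj.conjugate_le_conjugate_add_smul_one hc (le_iff.mpr h)).trans
      (add_le_add_right hwiden _))
  rw [hPA, hPC]
  exact ⟨compress hlow, compress hup⟩

/-- Tail terms: Suppose
`C Cᵀ − (ε/k)‖A‖_F² I ⪯ A Aᵀ ⪯ C Cᵀ + (ε/k)‖A‖_F² I`, and let `U` consist of the tail left
singular vectors of `A` (orthonormal columns, eigenvectors of `A Aᵀ` with eigenvalues
`σ_i² ≤ ‖A‖_F²/k`), `P_{∖ℓ} = U Uᵀ`, `A_{∖ℓ} = P_{∖ℓ} A`. Then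
`P_{∖ℓ} C Cᵀ P_{∖ℓ} − (2ε/k)‖A‖_F² I ⪯ A_{∖ℓ} A_{∖ℓ}ᵀ ⪯ P_{∖ℓ} C Cᵀ P_{∖ℓ} + (2ε/k)‖A‖_F² I`. -/
theorem stmt10 (m n t k s : ℕ) (hk : 0 < k)
    (A : Matrix (Fin m) (Fin n) ℝ) (C : Matrix (Fin m) (Fin t) ℝ)
    (ε : ℝ) (hε0 : 0 < ε) (hε1 : ε < 1)
    (hlow : Matrix.PosSemidef
      (A * Aᵀ + (ε / k * frobSq A) • (1 : Matrix (Fin m) (Fin m) ℝ) - C * Cᵀ))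
    (hup : Matrix.PosSemidef
      (C * Cᵀ + (ε / k * frobSq A) • (1 : Matrix (Fin m) (Fin m) ℝ) - A * Aᵀ))
    (U : Matrix (Fin m) (Fin s) ℝ) (hU : Uᵀ * U = 1)
    (σ : Fin s → ℝ)
    (hsing : A * Aᵀ * U = U * Matrix.diagonal (fun i => σ i ^ 2))
    (hsmall : ∀ i, σ i ^ 2 ≤ frobSq A / k)
    (P : Matrix (Fin m) (Fin m) ℝ) (hP : P = U * Uᵀ) :
    Matrix.PosSemidef ((P * A) * (P * A)ᵀ +
      (2 * ε / k * frobSq A) • (1 : Matrix (Fin m) (Fin m) ℝ) - P * C * Cᵀ * P) ∧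
    Matrix.PosSemidef (P * C * Cᵀ * P +
      (2 * ε / k * frobSq A) • (1 : Matrix (Fin m) (Fin m) ℝ) - (P * A) * (P * A)ᵀ) :=
  stmt10_general m n t k s A C ε hε0 hlow hup U hU P hP
end

section
/- Let A = A₁ + A₂ − 2B be an n×n matrix with A₁ = a₁' a₁ᵀ, A₂ = a₂' a₂ᵀ rank-one, and B arbitrary. Suppose V ∈ ℝ^{n×(k+2)} has orthonormal columns and ‖B(I − VVᵀ)‖_F ≤ (1+ε)‖B − B_{k+2}‖_F. Let W be an orthonormal basis of span(columns of V, a₁, a₂), so W has at most k+4 columns. Then ‖A(I − WWᵀ)‖_F ≤ 2(1+ε)‖B − B_{k+2}‖_F ≤ (1+ε)‖A − A_k‖_F. In particular, A W Wᵀ is a rank-(k+4) matrix achieving the relative-error rank-k approximation guarantee for A. -/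
open Matrix

/-- Frobenius norm. -/
noncomputable def frobNorm {m n : ℕ} (M : Matrix (Fin m) (Fin n) ℝ) : ℝ :=
  Real.sqrt (∑ i, ∑ j, (M i j) ^ 2)

/-!
Write `P = W Wᵀ`, the orthogonal projection onto `span(V, a₁, a₂)`. Since `a₁, a₂` lie in its
range, the rank-one parts `a₁' a₁ᵀ` and `a₂' a₂ᵀ` are killed by `I − P`, so
`A(I − P) = −2 B(I − P)`. As `range V ⊆ range P`, we have `I − P = (I − VVᵀ)(I − P)`, and right
multiplication by the projection `I − P` does not increase the Frobenius norm; this gives the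
first inequality. For the second, if `A_k` is any rank-`k` matrix then
`(A₁ + A₂ − A_k)/2` has rank at most `k + 2` and differs from `B` by `−(A − A_k)/2`, so the
optimality of `B_{k+2}` gives `2‖B − B_{k+2}‖_F ≤ ‖A − A_k‖_F`.
-/

namespace Matrix

variable {K m n : Type*} [Field K] [Fintype n]

theorem rank_add_le [Finite m] (A B : Matrix m n K) : (A + B).rank ≤ A.rank + B.rank := by
  unfold Matrix.rank
  rw [mulVecLin_add]
  have hrange : LinearMap.range (A.mulVecLin + B.mulVecLin) ≤
      LinearMap.range A.mulVecLin ⊔ LinearMap.range B.mulVecLin := by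
    rintro _ ⟨x, rfl⟩
    exact Submodule.mem_sup.2 ⟨A.mulVecLin x, ⟨x, rfl⟩, B.mulVecLin x, ⟨x, rfl⟩, rfl⟩
  exact (Submodule.finrank_mono hrange).trans (Submodule.finrank_add_le_finrank_add_finrank _ _)

theorem rank_smul_le [Fintype m] (c : K) (A : Matrix m n K) : (c • A).rank ≤ A.rank := by
  classical
  rw [smul_eq_diagonal_mul]
  exact rank_mul_le_right _ _

theorem rank_sub_le [Fintype m] (A B : Matrix m n K) : (A - B).rank ≤ A.rank + B.rank := by
  rw [sub_eq_add_neg, ← neg_one_smul K B]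
  exact (rank_add_le _ _).trans (Nat.add_le_add_left (rank_smul_le _ _) _)

theorem vecMulVec_mul_one_sub_eq_zero {R : Type*} [CommRing R] [DecidableEq n] {P : Matrix n n R}
    (hP : P.IsSymm) (u : m → R) {v : n → R} (hv : P *ᵥ v = v) : vecMulVec u v * (1 - P) = 0 := by
  rw [vecMulVec_mul, vecMul_sub, vecMul_one, ← hP.eq, vecMul_transpose, hv, sub_self]
  exact ext fun _ _ => mul_zero _

end Matrix

section Frobenius

variable {m n : ℕ}

theorem frobNorm_sq (M : Matrix (Fin m) (Fin n) ℝ) : frobNorm M ^ 2 = (Mᵀ * M).trace := by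
  rw [frobNorm, Real.sq_sqrt (by positivity)]
  simp only [trace, diag, mul_apply, transpose_apply, sq]
  exact Finset.sum_comm

theorem frobNorm_smul (c : ℝ) (M : Matrix (Fin m) (Fin n) ℝ) :
    frobNorm (c • M) = |c| * frobNorm M := by
  simp only [frobNorm, Matrix.smul_apply, smul_eq_mul, mul_pow, ← Finset.mul_sum]
  rw [Real.sqrt_mul (sq_nonneg c), Real.sqrt_sq_eq_abs]

variable {P : Matrix (Fin n) (Fin n) ℝ}

theorem frobNorm_sq_mul_of_isSymm_of_isIdempotentElem (M : Matrix (Fin m) (Fin n) ℝ)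
    (hPs : P.IsSymm) (hPi : IsIdempotentElem P) : frobNorm (M * P) ^ 2 = (Mᵀ * M * P).trace := by
  rw [frobNorm_sq, transpose_mul, hPs.eq, Matrix.mul_assoc, trace_mul_comm, Matrix.mul_assoc,
    Matrix.mul_assoc M, hPi.eq, Matrix.mul_assoc]

theorem frobNorm_sq_mul_add_frobNorm_sq_mul_one_sub (M : Matrix (Fin m) (Fin n) ℝ)
    (hPs : P.IsSymm) (hPi : IsIdempotentElem P) :
    frobNorm (M * P) ^ 2 + frobNorm (M * (1 - P)) ^ 2 = frobNorm M ^ 2 := by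
  rw [frobNorm_sq_mul_of_isSymm_of_isIdempotentElem M hPs hPi,
    frobNorm_sq_mul_of_isSymm_of_isIdempotentElem M (isSymm_one.sub hPs) hPi.one_sub,
    ← trace_add, ← Matrix.mul_add, add_sub_cancel, Matrix.mul_one, frobNorm_sq]

theorem frobNorm_mul_le_of_isSymm_of_isIdempotentElem (M : Matrix (Fin m) (Fin n) ℝ)
    (hPs : P.IsSymm) (hPi : IsIdempotentElem P) : frobNorm (M * P) ≤ frobNorm M := by
  have hpyth := frobNorm_sq_mul_add_frobNorm_sq_mul_one_sub M hPs hPi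
  exact le_of_pow_le_pow_left₀ two_ne_zero (Real.sqrt_nonneg _) (by nlinarith)

theorem frobNorm_mul_one_sub_le_of_mul_eq (M : Matrix (Fin m) (Fin n) ℝ)
    (hPs : P.IsSymm) (hPi : IsIdempotentElem P) {Q : Matrix (Fin n) (Fin n) ℝ} (hQP : Q * P = Q) :
    frobNorm (M * (1 - P)) ≤ frobNorm (M * (1 - Q)) := by
  have hfactor : M * (1 - P) = M * (1 - Q) * (1 - P) := by
    rw [Matrix.mul_assoc, Matrix.sub_mul 1 Q, Matrix.one_mul, Matrix.mul_sub Q, Matrix.mul_one, hQP,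
      sub_self, sub_zero]
  rw [hfactor]
  exact frobNorm_mul_le_of_isSymm_of_isIdempotentElem _ (isSymm_one.sub hPs) hPi.one_sub

theorem two_mul_frobNorm_sub_le_of_rank_le {k : ℕ} {A₁ A₂ B Ak Bk2 : Matrix (Fin m) (Fin n) ℝ}
    (hA₁ : A₁.rank ≤ 1) (hA₂ : A₂.rank ≤ 1) (hAk : Ak.rank ≤ k)
    (hBk2opt : ∀ S : Matrix (Fin m) (Fin n) ℝ, S.rank ≤ k + 2 →
      frobNorm (B - Bk2) ≤ frobNorm (B - S)) :
    2 * frobNorm (B - Bk2) ≤ frobNorm (A₁ + A₂ - 2 • B - Ak) := by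
  set S := (2 : ℝ)⁻¹ • (A₁ + A₂ - Ak)
  have hS : S.rank ≤ k + 2 :=
    calc S.rank ≤ (A₁ + A₂ - Ak).rank := rank_smul_le _ _
      _ ≤ (A₁ + A₂).rank + Ak.rank := rank_sub_le _ _
      _ ≤ A₁.rank + A₂.rank + Ak.rank := Nat.add_le_add_right (rank_add_le _ _) _
      _ ≤ k + 2 := by omega
  have hBS : B - S = (-(2 : ℝ)⁻¹) • (A₁ + A₂ - 2 • B - Ak) := by
    simp only [S]
    module
  calc 2 * frobNorm (B - Bk2) ≤ 2 * frobNorm (B - S) := by gcongr; exact hBk2opt S hS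
    _ = frobNorm (A₁ + A₂ - 2 • B - Ak) := by
      rw [hBS, frobNorm_smul, abs_neg, abs_of_pos (by norm_num : (0 : ℝ) < 2⁻¹)]; ring

end Frobenius

theorem stmt17_general (n k s : ℕ) (ε : ℝ) (hε : 0 ≤ ε)
    (a₁ a₁' a₂ a₂' : Fin n → ℝ)
    (A A₁ A₂ B Ak Bk2 : Matrix (Fin n) (Fin n) ℝ)
    (hA₁ : A₁ = Matrix.vecMulVec a₁' a₁)
    (hA₂ : A₂ = Matrix.vecMulVec a₂' a₂)
    (hA : A = A₁ + A₂ - 2 • B)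
    (hAkrank : Ak.rank ≤ k)
    (hBk2opt : ∀ S : Matrix (Fin n) (Fin n) ℝ, S.rank ≤ k + 2 →
      frobNorm (B - Bk2) ≤ frobNorm (B - S))
    (V : Matrix (Fin n) (Fin (k + 2)) ℝ)
    (hVgood : frobNorm (B * (1 - V * Vᵀ)) ≤ (1 + ε) * frobNorm (B - Bk2))
    (W : Matrix (Fin n) (Fin s) ℝ) (hW : Wᵀ * W = 1)
    (hWV : W * Wᵀ * V = V)
    (hWa₁ : (W * Wᵀ) *ᵥ a₁ = a₁) (hWa₂ : (W * Wᵀ) *ᵥ a₂ = a₂) :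
    frobNorm (A * (1 - W * Wᵀ)) ≤ 2 * (1 + ε) * frobNorm (B - Bk2) ∧
    2 * (1 + ε) * frobNorm (B - Bk2) ≤ (1 + ε) * frobNorm (A - Ak) := by
  set P := W * Wᵀ
  have hPs : P.IsSymm := by simp [P, IsSymm, transpose_mul]
  have hPi : IsIdempotentElem P := by
    rw [IsIdempotentElem, Matrix.mul_assoc, ← Matrix.mul_assoc Wᵀ, hW, Matrix.one_mul]
  have hAP : A * (1 - P) = (-2 : ℝ) • (B * (1 - P)) := by
    rw [hA, hA₁, hA₂, Matrix.sub_mul, Matrix.add_mul, vecMulVec_mul_one_sub_eq_zero hPs _ hWa₁,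
      vecMulVec_mul_one_sub_eq_zero hPs _ hWa₂, Matrix.smul_mul]
    module
  have hVP : V * Vᵀ * P = V * Vᵀ := by
    rw [Matrix.mul_assoc, ← hPs.eq, ← transpose_mul, hWV]
  have hB := two_mul_frobNorm_sub_le_of_rank_le (rank_vecMulVec_le a₁' a₁)
    (rank_vecMulVec_le a₂' a₂) hAkrank hBk2opt
  rw [← hA₁, ← hA₂, ← hA] at hB
  constructor
  · calc frobNorm (A * (1 - P)) = 2 * frobNorm (B * (1 - P)) := by
          rw [hAP, frobNorm_smul]; norm_num
      _ ≤ 2 * frobNorm (B * (1 - V * Vᵀ)) := by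
          gcongr; exact frobNorm_mul_one_sub_le_of_mul_eq B hPs hPi hVP
      _ ≤ 2 * (1 + ε) * frobNorm (B - Bk2) := by linarith
  · calc 2 * (1 + ε) * frobNorm (B - Bk2) = (1 + ε) * (2 * frobNorm (B - Bk2)) := by ring
      _ ≤ (1 + ε) * frobNorm (A - Ak) := mul_le_mul_of_nonneg_left hB (by linarith)

/-- Bi-criteria guarantee for squared-Euclidean distance matrices.
If `A = A₁ + A₂ − 2B` with `A₁ = a₁' a₁ᵀ`, `A₂ = a₂' a₂ᵀ` rank one, `V` has `k+2`
orthonormal columns with `‖B(I − VVᵀ)‖_F ≤ (1+ε)‖B − B_{k+2}‖_F`, and `W` is an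
orthonormal basis of `span(V, a₁, a₂)` (at most `k+4` columns, span containing `V`'s
columns and `a₁, a₂`), then
`‖A(I − WWᵀ)‖_F ≤ 2(1+ε)‖B − B_{k+2}‖_F ≤ (1+ε)‖A − A_k‖_F`. -/
theorem stmt17 (n k s : ℕ) (hs : s ≤ k + 4) (ε : ℝ) (hε : 0 ≤ ε)
    (a₁ a₁' a₂ a₂' : Fin n → ℝ)
    (A A₁ A₂ B Ak Bk2 : Matrix (Fin n) (Fin n) ℝ)
    (hA₁ : A₁ = Matrix.vecMulVec a₁' a₁)
    (hA₂ : A₂ = Matrix.vecMulVec a₂' a₂)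
    (hA : A = A₁ + A₂ - 2 • B)
    (hAkrank : Ak.rank ≤ k)
    (hAkopt : ∀ R : Matrix (Fin n) (Fin n) ℝ, R.rank ≤ k →
      frobNorm (A - Ak) ≤ frobNorm (A - R))
    (hBk2rank : Bk2.rank ≤ k + 2)
    (hBk2opt : ∀ S : Matrix (Fin n) (Fin n) ℝ, S.rank ≤ k + 2 →
      frobNorm (B - Bk2) ≤ frobNorm (B - S))
    (V : Matrix (Fin n) (Fin (k + 2)) ℝ) (hV : Vᵀ * V = 1)
    (hVgood : frobNorm (B * (1 - V * Vᵀ)) ≤ (1 + ε) * frobNorm (B - Bk2))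
    (W : Matrix (Fin n) (Fin s) ℝ) (hW : Wᵀ * W = 1)
    (hWV : W * Wᵀ * V = V)
    (hWa₁ : (W * Wᵀ) *ᵥ a₁ = a₁) (hWa₂ : (W * Wᵀ) *ᵥ a₂ = a₂) :
    frobNorm (A * (1 - W * Wᵀ)) ≤ 2 * (1 + ε) * frobNorm (B - Bk2) ∧
    2 * (1 + ε) * frobNorm (B - Bk2) ≤ (1 + ε) * frobNorm (A - Ak) :=
  stmt17_general n k s ε hε a₁ a₁' a₂ a₂' A A₁ A₂ B Ak Bk2 hA₁ hA₂ hA hAkrank hBk2opt V hVgood W hW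
    hWV hWa₁ hWa₂
end

section
/- There exist n×n matrices A, arising as ℓ∞-distance matrices between two n-point sets, such that A has rank 2, and A is not determined by any proper subset of its entries: specifically, taking P = {e_1,…,e_n} (standard basis of ℝⁿ) and Q consisting of n−1 zero vectors and one vector q = s·e_i with s ∈ {+1,−1} and i ∈ [n], the matrix A with A_{a,b} = ‖p_a − q_b‖_∞ has all entries equal to 1 except A_{i, j*} ∈ {0, 2} (where j* indexes q), with the value 0 if s = +1 and 2 if s = −1. Consequently, any two distinct choices of (i, s) yield distance matrices differing in exactly one entry, and ‖A − A_k‖_F = 0 for all k ≥ 2. -/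
/-!
Every point `e_a` of `P` is at sup-distance `1` from the origin and from `s • e_i` with `a ≠ i`,
and at distance `|1 - s| = 1 - s` from `s • e_i` when `a = i`. Hence the distance matrix is the
all-ones matrix minus the single-entry matrix `s • E_{i j*}`, a sum of two rank-one matrices, and
`(i, s)` can be read off from its unique entry different from `1`.
-/

open Matrix

theorem Matrix.rank_add_le_s18 {m n K : Type*} [Fintype m] [Fintype n] [Field K]
    (A B : Matrix m n K) : (A + B).rank ≤ A.rank + B.rank := by
  rw [Matrix.rank, Matrix.rank, Matrix.rank, Matrix.mulVecLin_add]
  have hrange : LinearMap.range (A.mulVecLin + B.mulVecLin) ≤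
      LinearMap.range A.mulVecLin ⊔ LinearMap.range B.mulVecLin := by
    rintro x ⟨v, rfl⟩
    exact Submodule.add_mem_sup (LinearMap.mem_range_self _ v) (LinearMap.mem_range_self _ v)
  exact (Submodule.finrank_mono hrange).trans (Submodule.finrank_add_le_finrank_add_finrank _ _)

theorem Pi.norm_single_sub_single {ι E : Type*} [Fintype ι] [DecidableEq ι]
    [SeminormedAddCommGroup E] {a i : ι} (h : a ≠ i) (x y : E) :
    ‖(Pi.single a x : ι → E) - Pi.single i y‖ = max ‖x‖ ‖y‖ := by
  refine le_antisymm ((pi_norm_le_iff_of_nonneg (by positivity)).2 fun k => ?_) (max_le ?_ ?_)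
  · by_cases hka : k = a
    · subst hka; simp [h]
    · by_cases hki : k = i
      · subst hki; simp [hka]
      · simp [hka, hki]
  · have := norm_le_pi_norm ((Pi.single a x : ι → E) - Pi.single i y) a
    rwa [Pi.sub_apply, Pi.single_eq_same, Pi.single_eq_of_ne h, sub_zero] at this
  · have := norm_le_pi_norm ((Pi.single a x : ι → E) - Pi.single i y) i
    rwa [Pi.sub_apply, Pi.single_eq_same, Pi.single_eq_of_ne h.symm, zero_sub, norm_neg] at this

theorem norm_single_sub_ite_smul_single {ι κ : Type*} [Fintype ι] [DecidableEq ι]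
    [DecidableEq κ] {s : ℝ} (hs : |s| ≤ 1) (a i : ι) (b j : κ) :
    ‖(Pi.single a 1 : ι → ℝ) - if b = j then s • Pi.single i 1 else 0‖ =
      1 - single i j s a b := by
  rw [single_apply]
  by_cases hb : b = j
  · rw [if_pos hb, ← Pi.single_smul', smul_eq_mul, mul_one]
    by_cases ha : a = i
    · subst ha
      rw [← Pi.single_sub, Pi.norm_single, if_pos ⟨rfl, hb.symm⟩, Real.norm_eq_abs,
        abs_of_nonneg (by linarith [le_abs_self s])]
    · rw [Pi.norm_single_sub_single ha, if_neg fun h => ha h.1.symm]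
      simpa using hs
  · rw [if_neg hb, if_neg fun h => hb h.2.symm, sub_zero, sub_zero, Pi.norm_single, norm_one]

section OnesSubSingle

variable {m n : Type*} [DecidableEq m] [DecidableEq n]

theorem rank_of_one_sub_single_le {K : Type*} [Fintype m] [Fintype n] [Field K]
    (i : m) (j : n) (s : K) : (of (fun _ _ => 1) - single i j s : Matrix m n K).rank ≤ 2 := by
  have hsplit : (of (fun _ _ => 1) - single i j s : Matrix m n K) =
      vecMulVec 1 1 + vecMulVec (Pi.single i (-s)) (Pi.single j 1) := by
    ext a b
    simp only [Matrix.sub_apply, Matrix.add_apply, of_apply, vecMulVec_apply, single_apply,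
      Pi.single_apply, Pi.one_apply]
    split_ifs <;> simp_all [sub_eq_add_neg]
  rw [hsplit]
  exact (Matrix.rank_add_le_s18 _ _).trans (add_le_add (rank_vecMulVec_le _ _) (rank_vecMulVec_le _ _))

theorem setOf_of_one_sub_single_ne_one {R : Type*} [Ring R] {s : R} (hs : s ≠ 0)
    (i : m) (j : n) :
    {p : m × n | (of (fun _ _ => 1) - single i j s : Matrix m n R) p.1 p.2 ≠ 1} = {(i, j)} := by
  ext ⟨a, b⟩
  simp only [Set.mem_ofPred_eq, Set.mem_singleton_iff, Matrix.sub_apply, of_apply, single_apply,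
    Prod.mk.injEq]
  split_ifs with h
  · simp [h, hs]
  · simp [h, eq_comm]

theorem of_one_sub_single_inj {R : Type*} [Ring R] {s s' : R} (hs : s ≠ 0) (hs' : s' ≠ 0)
    {i i' : m} {j j' : n}
    (h : (of (fun _ _ => 1) - single i j s : Matrix m n R) = of (fun _ _ => 1) - single i' j' s') :
    i = i' ∧ j = j' ∧ s = s' := by
  have hsets := congrArg (fun M : Matrix m n R => {p : m × n | M p.1 p.2 ≠ 1}) h
  simp only [setOf_of_one_sub_single_ne_one hs, setOf_of_one_sub_single_ne_one hs',
    Set.singleton_eq_singleton_iff, Prod.mk.injEq] at hsets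
  obtain ⟨rfl, rfl⟩ := hsets
  simpa using congrFun₂ h i j

end OnesSubSingle

theorem stmt18_general (n : ℕ) (jstar : Fin n)
    (i i' : Fin n) (s s' : ℝ) (hs : s = 1 ∨ s = -1) (hs' : s' = 1 ∨ s' = -1)
    (P : Fin n → (Fin n → ℝ)) (hP : ∀ a, P a = Pi.single a 1)
    (Q Q' : Fin n → (Fin n → ℝ))
    (hQ : ∀ b, Q b = if b = jstar then s • (Pi.single i 1 : Fin n → ℝ) else 0)
    (hQ' : ∀ b, Q' b = if b = jstar then s' • (Pi.single i' 1 : Fin n → ℝ) else 0)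
    (A A' : Matrix (Fin n) (Fin n) ℝ)
    (hA : ∀ a b, A a b = ‖P a - Q b‖)
    (hA' : ∀ a b, A' a b = ‖P a - Q' b‖) :
    (A i jstar = if s = 1 then 0 else 2) ∧
    (∀ a b, (a, b) ≠ (i, jstar) → A a b = 1) ∧
    A.rank ≤ 2 ∧
    ({p : Fin n × Fin n | A p.1 p.2 ≠ 1} = {(i, jstar)}) ∧
    ((i, s) ≠ (i', s') → A ≠ A') := by
  have hsign : ∀ t : ℝ, t = 1 ∨ t = -1 → |t| = 1 ∧ t ≠ 0 := by
    rintro t (rfl | rfl) <;> norm_num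
  obtain ⟨habs, hs0⟩ := hsign s hs
  obtain ⟨habs', hs0'⟩ := hsign s' hs'
  have hAeq : A = of (fun _ _ => 1) - single i jstar s := by
    ext a b
    rw [hA, hP, hQ, norm_single_sub_ite_smul_single habs.le]
    rfl
  have hA'eq : A' = of (fun _ _ => 1) - single i' jstar s' := by
    ext a b
    rw [hA', hP, hQ', norm_single_sub_ite_smul_single habs'.le]
    rfl
  have hsupp : {p : Fin n × Fin n | A p.1 p.2 ≠ 1} = {(i, jstar)} :=
    hAeq ▸ setOf_of_one_sub_single_ne_one hs0 i jstar
  refine ⟨?_, ?_, hAeq ▸ rank_of_one_sub_single_le i jstar s, hsupp, ?_⟩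
  · rcases hs with rfl | rfl <;> norm_num [hAeq]
  · intro a b hab
    by_contra h
    exact hab (hsupp.subset h)
  · intro hdiff hAA
    obtain ⟨rfl, -, rfl⟩ := of_one_sub_single_inj hs0 hs0' (hAeq.symm.trans (hAA.trans hA'eq))
    exact hdiff rfl

/-- The `ℓ∞` lower-bound instance. With `P = {e₁,…,e_n} ⊆ (Fin n → ℝ)`
(sup norm), `Q` consisting of `n−1` zero vectors and one vector `q = s·e_i` (at position
`j*`, with `s = ±1`), the distance matrix `A a b = ‖P a − Q b‖_∞` has all entries `1`
except `A i j* = 0` (if `s = 1`) or `2` (if `s = −1`); it has rank at most `2` (hence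
`‖A − A_k‖_F = 0` for `k ≥ 2`), it differs from the all-ones matrix in exactly the single
entry `(i, j*)`, and distinct choices of `(i, s)` give distinct matrices. -/
theorem stmt18 (n : ℕ) (hn : 2 ≤ n) (jstar : Fin n)
    (i i' : Fin n) (s s' : ℝ) (hs : s = 1 ∨ s = -1) (hs' : s' = 1 ∨ s' = -1)
    (P : Fin n → (Fin n → ℝ)) (hP : ∀ a, P a = Pi.single a 1)
    (Q Q' : Fin n → (Fin n → ℝ))
    (hQ : ∀ b, Q b = if b = jstar then s • (Pi.single i 1 : Fin n → ℝ) else 0)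
    (hQ' : ∀ b, Q' b = if b = jstar then s' • (Pi.single i' 1 : Fin n → ℝ) else 0)
    (A A' : Matrix (Fin n) (Fin n) ℝ)
    (hA : ∀ a b, A a b = ‖P a - Q b‖)
    (hA' : ∀ a b, A' a b = ‖P a - Q' b‖) :
    (A i jstar = if s = 1 then 0 else 2) ∧
    (∀ a b, (a, b) ≠ (i, jstar) → A a b = 1) ∧
    A.rank ≤ 2 ∧
    ({p : Fin n × Fin n | A p.1 p.2 ≠ 1} = {(i, jstar)}) ∧
    ((i, s) ≠ (i', s') → A ≠ A') :=
  stmt18_general n jstar i i' s s' hs hs' P hP Q Q' hQ hQ' A A' hA hA'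
end
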